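/- Suppose D_n is a sequence of discrete random variables each conditionally independent of Z given X, with lim_{n→∞} I(D_n; X) = H(X) and lim_{n→∞} H(X | D_n, Z) = 0. Then lim_{n→∞} I(D_n; Z) = I(X; Z). -/
import Mathlib


open Finset Real Filter Topology

variable {Ω : Type*} [Fintype Ω]

/-- Marginal probability mass function of the discrete random variable `X`
under the pmf `p` on the finite sample space `Ω`. -/
noncomputable def pmfOf {α : Type*} [Fintype α] [DecidableEq α]
    (p : Ω → ℝ) (X : Ω → α) (a : α) : ℝ :=
  ∑ ω ∈ Finset.univ.filter (fun ω => X ω = a), p ω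

/-- Shannon entropy `H(X)` (with the convention `0 log 0 = 0`). -/
noncomputable def entropy {α : Type*} [Fintype α] [DecidableEq α]
    (p : Ω → ℝ) (X : Ω → α) : ℝ :=
  ∑ a, Real.negMulLog (pmfOf p X a)

/-- Conditional Shannon entropy `H(X | Z) = H(X, Z) - H(Z)`. -/
noncomputable def condEntropy {α β : Type*} [Fintype α] [DecidableEq α]
    [Fintype β] [DecidableEq β] (p : Ω → ℝ) (X : Ω → α) (Z : Ω → β) : ℝ :=
  entropy p (fun ω => (X ω, Z ω)) - entropy p Z

/-- Mutual information `I(X; Z)`, defined as the expected log-ratio of the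
joint distribution to the product of the marginals. -/
noncomputable def mutualInfo {α β : Type*} [Fintype α] [DecidableEq α]
    [Fintype β] [DecidableEq β] (p : Ω → ℝ) (X : Ω → α) (Z : Ω → β) : ℝ :=
  ∑ a, ∑ b,
    pmfOf p (fun ω => (X ω, Z ω)) (a, b) *
      Real.log (pmfOf p (fun ω => (X ω, Z ω)) (a, b) / (pmfOf p X a * pmfOf p Z b))

/-- Conditional mutual information `I(X; Y | Z) = H(X|Z) + H(Y|Z) - H(X,Y|Z)`. -/
noncomputable def condMutualInfo {α β γ : Type*} [Fintype α] [DecidableEq α]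
    [Fintype β] [DecidableEq β] [Fintype γ] [DecidableEq γ]
    (p : Ω → ℝ) (X : Ω → α) (Y : Ω → β) (Z : Ω → γ) : ℝ :=
  condEntropy p X Z + condEntropy p Y Z - condEntropy p (fun ω => (X ω, Y ω)) Z

/-- `D` and `Z` are conditionally independent given `X`:
`P(D, Z | X) = P(D | X) P(Z | X)`, stated multiplied through by `P(X)`. -/
def CondIndep {α β γ : Type*} [Fintype α] [DecidableEq α]
    [Fintype β] [DecidableEq β] [Fintype γ] [DecidableEq γ]
    (p : Ω → ℝ) (D : Ω → α) (Z : Ω → β) (X : Ω → γ) : Prop :=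
  ∀ d z x,
    pmfOf p (fun ω => (D ω, Z ω, X ω)) (d, z, x) * pmfOf p X x =
      pmfOf p (fun ω => (D ω, X ω)) (d, x) * pmfOf p (fun ω => (Z ω, X ω)) (z, x)

/-- Interaction (three-way) mutual information `I(X;Y;Z) := I(X;Y) - I(X;Y|Z)`. -/
noncomputable def interactionInfo {α β γ : Type*} [Fintype α] [DecidableEq α]
    [Fintype β] [DecidableEq β] [Fintype γ] [DecidableEq γ]
    (p : Ω → ℝ) (X : Ω → α) (Y : Ω → β) (Z : Ω → γ) : ℝ :=
  mutualInfo p X Y - condMutualInfo p X Y Z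


section Aux

variable {α β γ : Type*} [Fintype α] [DecidableEq α] [Fintype β] [DecidableEq β]
  [Fintype γ] [DecidableEq γ] (p : Ω → ℝ)

lemma pmfOf_nonneg (hp : ∀ ω, 0 ≤ p ω) (A : Ω → α) (a : α) : 0 ≤ pmfOf p A a :=
  Finset.sum_nonneg fun ω _ => hp ω

lemma pmfOf_comp_equiv (e : α ≃ β) (A : Ω → α) (b : β) :
    pmfOf p (fun ω => e (A ω)) b = pmfOf p A (e.symm b) := by
  unfold pmfOf
  congr 1
  apply Finset.filter_congr
  intro ω _
  simp [Equiv.eq_symm_apply]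

lemma entropy_comp_equiv (e : α ≃ β) (A : Ω → α) :
    entropy p (fun ω => e (A ω)) = entropy p A := by
  unfold entropy
  simp_rw [pmfOf_comp_equiv]
  exact Equiv.sum_comp e.symm (fun a => Real.negMulLog (pmfOf p A a))

lemma pmfOf_fst (A : Ω → α) (B : Ω → β) (a : α) :
    pmfOf p A a = ∑ b, pmfOf p (fun ω => (A ω, B ω)) (a, b) := by
  unfold pmfOf
  rw [← Finset.sum_fiberwise (Finset.univ.filter (fun ω => A ω = a)) B p]
  congr 1
  ext b
  rw [Finset.filter_filter]
  congr 1
  apply Finset.filter_congr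
  intro ω _
  simp [Prod.ext_iff, and_comm]

lemma pmfOf_snd (A : Ω → α) (B : Ω → β) (b : β) :
    pmfOf p B b = ∑ a, pmfOf p (fun ω => (A ω, B ω)) (a, b) := by
  have h : ∀ a, pmfOf p (fun ω => (A ω, B ω)) (a, b)
      = pmfOf p (fun ω => (B ω, A ω)) (b, a) := by
    intro a
    have := pmfOf_comp_equiv p (Equiv.prodComm β α) (fun ω => (B ω, A ω)) (a, b)
    simpa using this
  simp_rw [h]
  exact pmfOf_fst p B A b

lemma pmfOf_pair_le_fst (hp : ∀ ω, 0 ≤ p ω) (A : Ω → α) (B : Ω → β) (a : α) (b : β) :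
    pmfOf p (fun ω => (A ω, B ω)) (a, b) ≤ pmfOf p A a := by
  rw [pmfOf_fst p A B a]
  exact Finset.single_le_sum (fun b' _ => pmfOf_nonneg p hp _ _) (Finset.mem_univ b)

lemma entropy_pair_comm (A : Ω → α) (B : Ω → β) :
    entropy p (fun ω => (A ω, B ω)) = entropy p (fun ω => (B ω, A ω)) := by
  have := entropy_comp_equiv p (Equiv.prodComm β α) (fun ω => (B ω, A ω))
  simpa using this

lemma mutualInfo_eq (hp : ∀ ω, 0 ≤ p ω) (A : Ω → α) (B : Ω → β) :
    mutualInfo p A B = entropy p A + entropy p B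
      - entropy p (fun ω => (A ω, B ω)) := by
  set q : α × β → ℝ := pmfOf p (fun ω => (A ω, B ω)) with hq
  have key : ∀ a b, q (a, b) * Real.log (q (a, b) / (pmfOf p A a * pmfOf p B b))
      = q (a, b) * Real.log (q (a, b))
        - q (a, b) * Real.log (pmfOf p A a) - q (a, b) * Real.log (pmfOf p B b) := by
    intro a b
    rcases eq_or_lt_of_le (pmfOf_nonneg p hp (fun ω => (A ω, B ω)) (a, b)) with h0 | h0
    · rw [← hq] at h0; rw [← h0]; ring
    · have ha : 0 < pmfOf p A a := lt_of_lt_of_le h0 (pmfOf_pair_le_fst p hp A B a b)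
      have hb : 0 < pmfOf p B b := by
        have h := pmfOf_pair_le_fst p hp B A b a
        have he : pmfOf p (fun ω => (B ω, A ω)) (b, a) = q (a, b) := by
          have := pmfOf_comp_equiv p (Equiv.prodComm α β) (fun ω => (A ω, B ω)) (b, a)
          simpa [hq] using this
        rw [he] at h
        exact lt_of_lt_of_le h0 h
      rw [Real.log_div (ne_of_gt h0) (by positivity), Real.log_mul (ne_of_gt ha) (ne_of_gt hb)]
      ring
  have hA : ∑ a, ∑ b, q (a, b) * Real.log (pmfOf p A a) = -entropy p A := by
    unfold entropy
    rw [← Finset.sum_neg_distrib]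
    apply Finset.sum_congr rfl
    intro a _
    rw [← Finset.sum_mul, ← pmfOf_fst p A B a, Real.negMulLog]
    ring
  have hB : ∑ a, ∑ b, q (a, b) * Real.log (pmfOf p B b) = -entropy p B := by
    unfold entropy
    rw [Finset.sum_comm, ← Finset.sum_neg_distrib]
    apply Finset.sum_congr rfl
    intro b _
    rw [← Finset.sum_mul, ← pmfOf_snd p A B b, Real.negMulLog]
    ring
  have hAB : ∑ a, ∑ b, q (a, b) * Real.log (q (a, b))
      = -entropy p (fun ω => (A ω, B ω)) := by
    unfold entropy
    rw [← Finset.sum_neg_distrib, Fintype.sum_prod_type]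
    apply Finset.sum_congr rfl
    intro a _
    apply Finset.sum_congr rfl
    intro b _
    rw [Real.negMulLog, ← hq]
    ring
  unfold mutualInfo
  simp_rw [← hq, key]
  simp only [Finset.sum_sub_distrib]
  rw [hAB, hA, hB]
  ring

/-- equiv (d,z,x) ↦ ((d,x),z) -/
def eDXZ : α × β × γ ≃ (α × γ) × β :=
  ⟨fun t => ((t.1, t.2.2), t.2.1), fun t => (t.1.1, t.2, t.1.2),
    fun ⟨_, _, _⟩ => rfl, fun ⟨⟨_, _⟩, _⟩ => rfl⟩

/-- equiv (d,z,x) ↦ ((z,x),d) -/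
def eZXD : α × β × γ ≃ (β × γ) × α :=
  ⟨fun t => ((t.2.1, t.2.2), t.1), fun t => (t.2, t.1.1, t.1.2),
    fun ⟨_, _, _⟩ => rfl, fun ⟨⟨_, _⟩, _⟩ => rfl⟩

/-- equiv (d,z,x) ↦ (x,(d,z)) -/
def eXDZ : α × β × γ ≃ γ × α × β :=
  ⟨fun t => (t.2.2, t.1, t.2.1), fun t => (t.2.1, t.2.2, t.1),
    fun ⟨_, _, _⟩ => rfl, fun ⟨_, _, _⟩ => rfl⟩

variable (D : Ω → α) (Z : Ω → β) (X : Ω → γ)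

lemma marg_DX (d : α) (x : γ) :
    pmfOf p (fun ω => (D ω, X ω)) (d, x)
      = ∑ z, pmfOf p (fun ω => (D ω, Z ω, X ω)) (d, z, x) := by
  rw [pmfOf_fst p (fun ω => (D ω, X ω)) Z (d, x)]
  apply Finset.sum_congr rfl
  intro z _
  have he := pmfOf_comp_equiv p (eDXZ) (fun ω => (D ω, Z ω, X ω)) ((d, x), z)
  simp only [eDXZ, Equiv.coe_fn_mk, Equiv.coe_fn_symm_mk] at he
  exact he

lemma marg_ZX (z : β) (x : γ) :
    pmfOf p (fun ω => (Z ω, X ω)) (z, x)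
      = ∑ d, pmfOf p (fun ω => (D ω, Z ω, X ω)) (d, z, x) := by
  rw [pmfOf_fst p (fun ω => (Z ω, X ω)) D (z, x)]
  apply Finset.sum_congr rfl
  intro d _
  have he := pmfOf_comp_equiv p (eZXD) (fun ω => (D ω, Z ω, X ω)) ((z, x), d)
  simp only [eZXD, Equiv.coe_fn_mk, Equiv.coe_fn_symm_mk] at he
  exact he

lemma marg_X (x : γ) :
    pmfOf p X x = ∑ d, ∑ z, pmfOf p (fun ω => (D ω, Z ω, X ω)) (d, z, x) := by
  rw [pmfOf_fst p X (fun ω => (D ω, Z ω)) x, Fintype.sum_prod_type]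
  apply Finset.sum_congr rfl
  intro d _
  apply Finset.sum_congr rfl
  intro z _
  have he := pmfOf_comp_equiv p (eXDZ) (fun ω => (D ω, Z ω, X ω)) (x, d, z)
  simp only [eXDZ, Equiv.coe_fn_mk, Equiv.coe_fn_symm_mk] at he
  exact he

lemma triple_le_X (hp : ∀ ω, 0 ≤ p ω) (d : α) (z : β) (x : γ) :
    pmfOf p (fun ω => (D ω, Z ω, X ω)) (d, z, x) ≤ pmfOf p X x := by
  have h := pmfOf_pair_le_fst p hp X (fun ω => (D ω, Z ω)) x (d, z)
  have he := pmfOf_comp_equiv p (eXDZ) (fun ω => (D ω, Z ω, X ω)) (x, d, z)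
  simp only [eXDZ, Equiv.coe_fn_mk, Equiv.coe_fn_symm_mk] at he
  linarith [h, he]

lemma condIndep_entropy (hp : ∀ ω, 0 ≤ p ω) (h : CondIndep p D Z X) :
    entropy p (fun ω => (D ω, Z ω, X ω))
      = entropy p (fun ω => (D ω, X ω)) + entropy p (fun ω => (Z ω, X ω))
        - entropy p X := by
  set q : α × β × γ → ℝ := pmfOf p (fun ω => (D ω, Z ω, X ω)) with hq
  set a : α × γ → ℝ := pmfOf p (fun ω => (D ω, X ω)) with ha
  set b : β × γ → ℝ := pmfOf p (fun ω => (Z ω, X ω)) with hb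
  set r : γ → ℝ := pmfOf p X with hr
  have key : ∀ d z x, Real.negMulLog (q (d, z, x))
      = -(q (d, z, x) * Real.log (a (d, x))) - q (d, z, x) * Real.log (b (z, x))
        + q (d, z, x) * Real.log (r x) := by
    intro d z x
    rcases eq_or_lt_of_le (pmfOf_nonneg p hp (fun ω => (D ω, Z ω, X ω)) (d, z, x))
      with h0 | h0
    · rw [← hq] at h0
      rw [← h0]
      simp [Real.negMulLog]
    · have hrx : 0 < r x := lt_of_lt_of_le h0 (triple_le_X p D Z X hp d z x)
      have hab : 0 < a (d, x) * b (z, x) := by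
        rw [← h d z x]
        exact mul_pos h0 hrx
      have ha0 : 0 < a (d, x) := by
        by_contra hcon
        push_neg at hcon
        have h00 : a (d, x) = 0 := le_antisymm hcon (pmfOf_nonneg p hp _ _)
        rw [h00, zero_mul] at hab
        exact lt_irrefl 0 hab
      have hb0 : 0 < b (z, x) := by
        by_contra hcon
        push_neg at hcon
        have h00 : b (z, x) = 0 := le_antisymm hcon (pmfOf_nonneg p hp _ _)
        rw [h00, mul_zero] at hab
        exact lt_irrefl 0 hab
      have hq0 : q (d, z, x) = a (d, x) * b (z, x) / r x := by
        rw [eq_div_iff hrx.ne']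
        exact h d z x
      rw [Real.negMulLog, hq0, Real.log_div (by positivity) hrx.ne',
        Real.log_mul ha0.ne' hb0.ne']
      ring
  have hH3 : entropy p (fun ω => (D ω, Z ω, X ω))
      = ∑ d, ∑ z, ∑ x, Real.negMulLog (q (d, z, x)) := by
    unfold entropy
    rw [Fintype.sum_prod_type]
    exact Finset.sum_congr rfl fun d _ => by rw [Fintype.sum_prod_type, ← hq]
  have hSa : ∑ d, ∑ z, ∑ x, q (d, z, x) * Real.log (a (d, x))
      = -entropy p (fun ω => (D ω, X ω)) := by
    unfold entropy
    rw [← Finset.sum_neg_distrib, Fintype.sum_prod_type]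
    apply Finset.sum_congr rfl
    intro d _
    rw [Finset.sum_comm]
    apply Finset.sum_congr rfl
    intro x _
    rw [← Finset.sum_mul, hq, ← marg_DX p D Z X d x, Real.negMulLog, ← ha]
    ring
  have hSb : ∑ d, ∑ z, ∑ x, q (d, z, x) * Real.log (b (z, x))
      = -entropy p (fun ω => (Z ω, X ω)) := by
    unfold entropy
    rw [Finset.sum_comm, ← Finset.sum_neg_distrib, Fintype.sum_prod_type]
    apply Finset.sum_congr rfl
    intro z _
    rw [Finset.sum_comm]
    apply Finset.sum_congr rfl
    intro x _
    rw [← Finset.sum_mul, hq, ← marg_ZX p D Z X z x, Real.negMulLog, ← hb]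
    ring
  have hSr : ∑ d, ∑ z, ∑ x, q (d, z, x) * Real.log (r x) = -entropy p X := by
    unfold entropy
    have hc : ∀ d, ∑ z, ∑ x, q (d, z, x) * Real.log (r x)
        = ∑ x, ∑ z, q (d, z, x) * Real.log (r x) := fun d => Finset.sum_comm
    simp_rw [hc]
    rw [Finset.sum_comm, ← Finset.sum_neg_distrib]
    apply Finset.sum_congr rfl
    intro x _
    simp_rw [← Finset.sum_mul]
    rw [hq, ← marg_X p D Z X x, Real.negMulLog, ← hr]
    ring
  rw [hH3]
  simp_rw [key]
  simp only [Finset.sum_add_distrib, Finset.sum_sub_distrib, Finset.sum_neg_distrib]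
  rw [hSa, hSb, hSr]
  ring


lemma entropy_rot (D : Ω → α) (Z : Ω → β) (X : Ω → γ) :
    entropy p (fun ω => (X ω, D ω, Z ω)) = entropy p (fun ω => (D ω, Z ω, X ω)) := by
  have := entropy_comp_equiv p (eXDZ (α := α) (β := β) (γ := γ))
    (fun ω => (D ω, Z ω, X ω))
  simp only [eXDZ, Equiv.coe_fn_mk] at this
  exact this

end Aux

/-- if each `D n ⟂ Z | X`, `I(D n; X) → H(X)` and
`H(X | D n, Z) → 0`, then `I(D n; Z) → I(X; Z)`. -/
theorem mutualInfo_tendsto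
    {α β γ : Type*} [Fintype α] [DecidableEq α] [Fintype β] [DecidableEq β]
    [Fintype γ] [DecidableEq γ]
    (p : Ω → ℝ) (hp : ∀ ω, 0 ≤ p ω) (hp1 : ∑ ω, p ω = 1)
    (D : ℕ → Ω → α) (Z : Ω → β) (X : Ω → γ)
    (hindep : ∀ n, CondIndep p (D n) Z X)
    (hMI : Tendsto (fun n => mutualInfo p (D n) X) atTop (𝓝 (entropy p X)))
    (hCE : Tendsto (fun n => condEntropy p X (fun ω => (D n ω, Z ω))) atTop (𝓝 0)) :
    Tendsto (fun n => mutualInfo p (D n) Z) atTop (𝓝 (mutualInfo p X Z)) := by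
  have hkey : ∀ n, mutualInfo p (D n) Z
      = mutualInfo p X Z - entropy p X + mutualInfo p (D n) X
        + condEntropy p X (fun ω => (D n ω, Z ω)) := by
    intro n
    have h1 := mutualInfo_eq p hp (D n) Z
    have h2 := mutualInfo_eq p hp X Z
    have h3 := mutualInfo_eq p hp (D n) X
    have h4 := condIndep_entropy p (D n) Z X hp (hindep n)
    have h5 := entropy_rot p (D n) Z X
    have h6 := entropy_pair_comm p Z X
    unfold condEntropy
    linarith [h1, h2, h3, h4, h5, h6]
  have hlim := (hMI.const_add (mutualInfo p X Z - entropy p X)).add hCE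
  have heq : mutualInfo p X Z - entropy p X + entropy p X + 0 = mutualInfo p X Z := by
    ring
  rw [heq] at hlim
  exact hlim.congr fun n => (hkey n).symm
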